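/- Define q_{-1} = 1/√3 and q_k = 12^{-k}·Z(k+1) for k ≥ 0. Then q_{-1} + 2·Σ_{k≥0} q_k = 1 and q_{-1} - 2·Σ_{k≥0} k·q_k = 0. -/

import Mathlib

/-- `Z(1) = (2-√3)/4` and `Z(p) = 6^p·(2p-5)!!/(8√3·p!)` for `p ≥ 2`. -/
noncomputable def Zfun : ℕ → ℝ := fun p =>
  if p = 1 then (2 - Real.sqrt 3) / 4
  else 6 ^ p * Nat.doubleFactorial (2 * p - 5) / (8 * Real.sqrt 3 * Nat.factorial p)

/-- `q_k = 12^{-k} Z(k+1)` for `k ≥ 0`. -/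
noncomputable def qk (k : ℕ) : ℝ := Zfun (k + 1) / 12 ^ k

/-!
Write `c n = (2n-1)!!/(2ⁿ n!) = C(2n,n)/4ⁿ`, so that `c (n+1) = c n · (2n+1)/(2n+2)` and
`q_{k+1} = (√3/8) · c k / ((k+1)(k+2))`. Both series telescope:
`q_{k+1} = (√3/12)(e k - e (k+1))` with `e n = c n/(n+1)`, and
`(k+1) q_{k+1} = (√3/12)(f k - f (k+1))` with `f n = (3n+2) c n/(n+1)`.
Since `c n² ≤ 1/(n+1)`, both `e` and `f` tend to `0`, so the sums are `(√3/12) e 0 = √3/12` and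
`(√3/12) f 0 = √3/6`; adding `q₀ = (2-√3)/4` gives the two identities.
-/

open Filter Topology Nat

lemma hasSum_of_eq_sub_succ {f g : ℕ → ℝ} {l : ℝ} (hg : ∀ n, 0 ≤ g n)
    (hfg : ∀ n, g n = f n - f (n + 1)) (hf : Tendsto f atTop (𝓝 l)) : HasSum g (f 0 - l) := by
  rw [hasSum_iff_tendsto_nat_of_nonneg hg]
  simp_rw [hfg, Finset.sum_range_sub']
  exact hf.const_sub _

lemma doubleFactorial_two_mul_succ_sub_one (n : ℕ) :
    (2 * (n + 1) - 1)‼ = (2 * n + 1) * (2 * n - 1)‼ := by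
  rw [show 2 * (n + 1) - 1 = 2 * n + 1 by omega, doubleFactorial_add_one]

noncomputable def centralBinomRatio (n : ℕ) : ℝ := (2 * n - 1)‼ / (2 ^ n * n !)

local notation "c" => centralBinomRatio

lemma centralBinomRatio_zero : c 0 = 1 := by
  simp [centralBinomRatio]

lemma centralBinomRatio_pos (n : ℕ) : 0 < c n := by
  have := doubleFactorial_pos (2 * n - 1)
  unfold centralBinomRatio
  positivity

lemma centralBinomRatio_succ (n : ℕ) : c (n + 1) = c n * (2 * n + 1) / (2 * n + 2) := by
  unfold centralBinomRatio
  rw [doubleFactorial_two_mul_succ_sub_one, factorial_succ]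
  push_cast
  field_simp
  ring

lemma centralBinomRatio_sq_le (n : ℕ) : c n ^ 2 ≤ 1 / (n + 1) := by
  induction n with
  | zero => simp [centralBinomRatio_zero]
  | succ n ih =>
    -- `(2n+1)²(n+2) ≤ 4(n+1)³` keeps the induction going
    have key : ((2 * n + 1 : ℝ) / (2 * n + 2)) ^ 2 * (1 / (n + 1)) ≤ 1 / (n + 2) := by
      rw [div_pow, ← mul_div_assoc, mul_one, div_div, div_le_div_iff₀ (by positivity) (by positivity)]
      nlinarith
    push_cast
    rw [show (n : ℝ) + 1 + 1 = n + 2 by ring]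
    calc c (n + 1) ^ 2 = ((2 * n + 1 : ℝ) / (2 * n + 2)) ^ 2 * c n ^ 2 := by
          rw [centralBinomRatio_succ]; ring
      _ ≤ ((2 * n + 1 : ℝ) / (2 * n + 2)) ^ 2 * (1 / (n + 1)) := by gcongr
      _ ≤ 1 / (n + 2) := key

lemma tendsto_centralBinomRatio : Tendsto c atTop (𝓝 0) := by
  have hsqrt : Tendsto (fun n : ℕ => Real.sqrt (1 / ((n : ℝ) + 1))) atTop (𝓝 0) := by
    simpa using tendsto_one_div_add_atTop_nhds_zero_nat.sqrt
  refine squeeze_zero (fun n => (centralBinomRatio_pos n).le) (fun n => ?_) hsqrt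
  exact Real.le_sqrt_of_sq_le (centralBinomRatio_sq_le n)

lemma qk_succ (k : ℕ) : qk (k + 1) = Real.sqrt 3 / 8 * c k / ((k + 1) * (k + 2)) := by
  have hs : Real.sqrt 3 ^ 2 = 3 := Real.sq_sqrt (by norm_num)
  rw [qk, Zfun, if_neg (by omega), show 2 * (k + 1 + 1) - 5 = 2 * k - 1 by omega,
    centralBinomRatio, factorial_succ, factorial_succ, show (12 : ℝ) = 6 * 2 by norm_num, mul_pow]
  push_cast
  field_simp
  rw [hs]
  ring

lemma qk_succ_nonneg (k : ℕ) : 0 ≤ qk (k + 1) := by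
  rw [qk_succ]
  have := centralBinomRatio_pos k
  positivity

lemma qk_succ_eq_sub (k : ℕ) : qk (k + 1) =
    Real.sqrt 3 / 12 * (c k / (k + 1) - c (k + 1) / ((k + 1 : ℕ) + 1)) := by
  rw [qk_succ, centralBinomRatio_succ]
  push_cast
  field_simp
  ring

lemma succ_mul_qk_succ_eq_sub (k : ℕ) : ((k + 1 : ℕ) : ℝ) * qk (k + 1) =
    Real.sqrt 3 / 12 * ((3 * k + 2) * c k / (k + 1)
      - (3 * (k + 1 : ℕ) + 2) * c (k + 1) / ((k + 1 : ℕ) + 1)) := by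
  rw [qk_succ, centralBinomRatio_succ]
  push_cast
  field_simp
  ring

lemma hasSum_qk_succ : HasSum (fun k => qk (k + 1)) (Real.sqrt 3 / 12) := by
  have he : Tendsto (fun n : ℕ => c n / (n + 1)) atTop (𝓝 0) := by
    simpa [div_eq_mul_inv] using
      tendsto_centralBinomRatio.mul tendsto_one_div_add_atTop_nhds_zero_nat
  simpa [centralBinomRatio_zero] using
    hasSum_of_eq_sub_succ qk_succ_nonneg (fun k => by rw [qk_succ_eq_sub, mul_sub])
      (he.const_mul (Real.sqrt 3 / 12))

lemma hasSum_succ_mul_qk_succ :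
    HasSum (fun k : ℕ => ((k + 1 : ℕ) : ℝ) * qk (k + 1)) (Real.sqrt 3 / 6) := by
  have hf : Tendsto (fun n : ℕ => (3 * n + 2) * c n / (n + 1)) atTop (𝓝 0) := by
    refine squeeze_zero (fun n => ?_) (fun n => ?_)
      (by simpa using tendsto_centralBinomRatio.const_mul 3)
    · have := centralBinomRatio_pos n
      positivity
    · have := centralBinomRatio_pos n
      rw [div_le_iff₀ (by positivity)]
      nlinarith
  have := hasSum_of_eq_sub_succ (fun k => mul_nonneg (Nat.cast_nonneg _) (qk_succ_nonneg k))
    (fun k => by rw [succ_mul_qk_succ_eq_sub, mul_sub]) (hf.const_mul (Real.sqrt 3 / 12))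
  simp only [CharP.cast_eq_zero, mul_zero, zero_add, centralBinomRatio_zero, sub_zero] at this
  convert this using 1
  ring

/-- With `q_{-1} = 1/√3`: `q_{-1} + 2 Σ_k q_k = 1` and `q_{-1} - 2 Σ_k k q_k = 0`. -/
theorem q_identities :
    Summable qk ∧ Summable (fun k : ℕ => (k : ℝ) * qk k) ∧
    1 / Real.sqrt 3 + 2 * ∑' k : ℕ, qk k = 1 ∧
    1 / Real.sqrt 3 - 2 * ∑' k : ℕ, (k : ℝ) * qk k = 0 := by
  have h₁ : HasSum qk ((2 - Real.sqrt 3) / 4 + Real.sqrt 3 / 12) := by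
    rw [← hasSum_nat_add_iff' 1]
    simpa [qk, Zfun] using hasSum_qk_succ
  have h₂ : HasSum (fun k : ℕ => (k : ℝ) * qk k) (Real.sqrt 3 / 6) := by
    rw [← hasSum_nat_add_iff' 1]
    simpa using hasSum_succ_mul_qk_succ
  have hs : Real.sqrt 3 ^ 2 = 3 := Real.sq_sqrt (by norm_num)
  have hs0 : Real.sqrt 3 ≠ 0 := by positivity
  refine ⟨h₁.summable, h₂.summable, ?_, ?_⟩
  · rw [h₁.tsum_eq]
    field_simp
    linear_combination (-16 : ℝ) * hs
  · rw [h₂.tsum_eq]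
    field_simp
    linear_combination (-2 : ℝ) * hs
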